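/- arXiv:1204.1606 — 2 statements merged into one kernel-verified Lean document; each statement's English description precedes it below -/
import Mathlib

section
/- Let C be a cochain complex of locally finite B-modules such that C^i = 0 for i > 0, the cohomology H^i(C) vanishes for all i ≠ 0, and H^0(C) is finite-dimensional over k. Then there exists a subcomplex D of C such that every term D^i is finite-dimensional over k and the inclusion morphism D ↪ C is a quasi-isomorphism. -/
/-!
`k` is a field and `B` an associative unital `k`-algebra.  A `B`-module is
*finite-dimensional* if its underlying `k`-vector space (via the algebra map) is
finite-dimensional; it is *locally finite* if it is the union of its finite-dimensional
`B`-submodules.  A subcomplex of a cochain complex `C` is formalized as a complex `D`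
together with a morphism `D ⟶ C` that is a monomorphism in each degree.
-/

open CategoryTheory

variable (k : Type) [Field k] {B : Type} [Ring B] [Algebra k B]

/-- A `B`-module is finite-dimensional if the underlying `k`-vector space is. -/
def IsFinDimOver (M : ModuleCat.{0} B) : Prop :=
  FiniteDimensional k ((ModuleCat.restrictScalars (algebraMap k B)).obj M)

/-- A `B`-module is locally finite if every element lies in a `B`-submodule that is
finite-dimensional over `k`. -/
def IsLocFinOver (M : ModuleCat.{0} B) : Prop :=
  ∀ x : M, ∃ N : Submodule B M, x ∈ N ∧ IsFinDimOver k (ModuleCat.of B ↥N)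

/-!
The subcomplex `D` is built by descending induction, with `D^i = 0` for `i > 0`. Given a
finite-dimensional `D^{i+1}`, local finiteness of `C^i` provides a finite-dimensional
`D^i ⊆ d⁻¹(D^{i+1})` containing preimages of a `k`-basis of `D^{i+1} ∩ im d` and
representatives of a `k`-basis of `H^i(C)`, which is finite-dimensional in every degree.
The first choice makes `H(D) → H(C)` injective, the second makes it surjective.
-/

namespace CategoryTheory.ShortComplex

variable {R : Type*} [Ring R] {S₁ S₂ : ShortComplex (ModuleCat R)}

lemma quasiIso_of_moduleCat (φ : S₁ ⟶ S₂)
    (hsurj : ∀ x₂ : S₂.X₂, S₂.g.hom x₂ = 0 →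
      ∃ x₁ : S₁.X₂, S₁.g.hom x₁ = 0 ∧ x₂ - φ.τ₂.hom x₁ ∈ LinearMap.range S₂.f.hom)
    (hinj : ∀ x₁ : S₁.X₂, S₁.g.hom x₁ = 0 → φ.τ₂.hom x₁ ∈ LinearMap.range S₂.f.hom →
      x₁ ∈ LinearMap.range S₁.f.hom) :
    QuasiIso φ := by
  rw [quasiIso_iff_isIso_leftHomologyMap' φ S₁.moduleCatLeftHomologyData
    S₂.moduleCatLeftHomologyData, ConcreteCategory.isIso_iff_bijective]
  set κ : LinearMap.ker S₁.g.hom → LinearMap.ker S₂.g.hom :=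
    fun x ↦ cyclesMap' φ S₁.moduleCatLeftHomologyData S₂.moduleCatLeftHomologyData x
  have hπ (x : LinearMap.ker S₁.g.hom) : leftHomologyMap' φ S₁.moduleCatLeftHomologyData
      S₂.moduleCatLeftHomologyData (Submodule.Quotient.mk x) = Submodule.Quotient.mk (κ x) :=
    congr($(leftHomologyπ_naturality' φ S₁.moduleCatLeftHomologyData
      S₂.moduleCatLeftHomologyData) x)
  have hi (x : LinearMap.ker S₁.g.hom) : (κ x : S₂.X₂) = φ.τ₂ x :=
    congr($(cyclesMap'_i φ S₁.moduleCatLeftHomologyData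
      S₂.moduleCatLeftHomologyData) x)
  constructor
  · rw [injective_iff_map_eq_zero]
    intro a ha
    obtain ⟨x, rfl⟩ := Submodule.Quotient.mk_surjective _ a
    rw [hπ] at ha
    obtain ⟨y, hy⟩ := (Submodule.Quotient.mk_eq_zero _).mp ha
    obtain ⟨z, hz⟩ := hinj x x.2 ⟨y, (congrArg Subtype.val hy).trans (hi x)⟩
    exact (Submodule.Quotient.mk_eq_zero _).mpr ⟨z, Subtype.ext hz⟩
  · intro b
    obtain ⟨x₂, rfl⟩ := Submodule.Quotient.mk_surjective _ b
    obtain ⟨x₁, hx₁, y, hy⟩ := hsurj x₂ x₂.2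
    refine ⟨Submodule.Quotient.mk ⟨x₁, hx₁⟩, ?_⟩
    rw [hπ]
    refine ((Submodule.Quotient.eq _).mpr ?_).symm
    refine ⟨y, Subtype.ext ?_⟩
    change S₂.f y = x₂ - (κ ⟨x₁, hx₁⟩ : S₂.X₂)
    rw [hi]
    exact hy

end CategoryTheory.ShortComplex

namespace HomologicalComplex

variable {R : Type*} [Ring R] {ι : Type*} {c : ComplexShape ι}
  (C : HomologicalComplex (ModuleCat R) c)

section Subcomplex

variable (S : ∀ i, Submodule R (C.X i)) (hS : ∀ i j, S i ≤ (S j).comap (C.d i j).hom)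

def subcomplex : HomologicalComplex (ModuleCat R) c where
  X i := ModuleCat.of R (S i)
  d i j := ModuleCat.ofHom ((C.d i j).hom.restrict (hS i j))
  shape i j hij := by ext x; exact congr($(C.shape i j hij) x.1)
  d_comp_d' i j k _ _ := by ext x; exact congr($(C.d_comp_d i j k) x.1)

def subcomplexι : C.subcomplex S hS ⟶ C where
  f i := ModuleCat.ofHom (S i).subtype

instance (i : ι) : Mono ((C.subcomplexι S hS).f i) :=
  (ModuleCat.mono_iff_injective _).mpr Subtype.val_injective

lemma quasiIsoAt_subcomplexι (j : ι)
    (hcyc : LinearMap.ker (C.d j (c.next j)).hom ≤ S j ⊔ LinearMap.range (C.d (c.prev j) j).hom)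
    (hbdry : S j ⊓ LinearMap.range (C.d (c.prev j) j).hom ≤
      (S (c.prev j)).map (C.d (c.prev j) j).hom) :
    QuasiIsoAt (C.subcomplexι S hS) j := by
  rw [quasiIsoAt_iff]
  apply ShortComplex.quasiIso_of_moduleCat
  · intro x (hx : (C.d j (c.next j)).hom x = 0)
    obtain ⟨s, hs, b, ⟨y, rfl⟩, rfl⟩ := Submodule.mem_sup.mp (hcyc hx)
    refine ⟨⟨s, hs⟩, Subtype.ext ?_, y, ?_⟩
    · change (C.d j (c.next j)).hom s = 0
      simpa [← LinearMap.comp_apply, ← ModuleCat.hom_comp] using hx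
    · change _ = s + _ - s
      abel
  · rintro x - ⟨y, hy⟩
    obtain ⟨z, hz, hzx⟩ := hbdry ⟨x.2, y, hy⟩
    exact ⟨⟨z, hz⟩, Subtype.ext hzx⟩

end Subcomplex

structure IsLiftingPair (i j : ι) (Q : Submodule R (C.X i)) (P : Submodule R (C.X j)) : Prop where
  le_comap : Q ≤ P.comap (C.d i j).hom
  inf_range_le_map : P ⊓ LinearMap.range (C.d i j).hom ≤ Q.map (C.d i j).hom
  ker_le_sup_range : LinearMap.ker (C.d i j).hom ≤ Q ⊔ LinearMap.range (C.d (c.prev i) i).hom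

lemma IsLiftingPair.of_isZero {i j : ι} (Q : Submodule R (C.X i)) (P : Submodule R (C.X j))
    (hi : Limits.IsZero (C.X i)) (hj : Limits.IsZero (C.X j)) : C.IsLiftingPair i j Q P := by
  have := ModuleCat.subsingleton_of_isZero hi
  have := ModuleCat.subsingleton_of_isZero hj
  exact ⟨(Subsingleton.elim _ _).le, (Subsingleton.elim _ _).le, (Subsingleton.elim _ _).le⟩

end HomologicalComplex

section FiniteDimensionality

variable {k}

lemma IsFinDimOver.of_subsingleton (M : ModuleCat.{0} B) [Subsingleton M] : IsFinDimOver k M :=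
  have : Subsingleton ((ModuleCat.restrictScalars (algebraMap k B)).obj M) := ‹_›
  show FiniteDimensional k _ from inferInstance

lemma IsFinDimOver.of_isZero {M : ModuleCat.{0} B} (hM : Limits.IsZero M) : IsFinDimOver k M :=
  have := ModuleCat.subsingleton_of_isZero hM
  .of_subsingleton M

lemma IsFinDimOver.of_injective {M N : ModuleCat.{0} B} (f : M ⟶ N) (hf : Function.Injective f)
    (hN : IsFinDimOver k N) : IsFinDimOver k M :=
  have : FiniteDimensional k _ := hN
  FiniteDimensional.of_injective ((ModuleCat.restrictScalars (algebraMap k B)).map f).hom hf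

lemma IsFinDimOver.of_surjective {M N : ModuleCat.{0} B} (f : M ⟶ N) (hf : Function.Surjective f)
    (hM : IsFinDimOver k M) : IsFinDimOver k N :=
  have : FiniteDimensional k _ := hM
  Module.Finite.of_surjective ((ModuleCat.restrictScalars (algebraMap k B)).map f).hom hf

variable {M : ModuleCat.{0} B}

lemma isFinDimOver_bot : IsFinDimOver k (ModuleCat.of B (⊥ : Submodule B M)) :=
  .of_subsingleton _

lemma IsFinDimOver.of_le {N N' : Submodule B M} (h : N ≤ N')
    (hN' : IsFinDimOver k (ModuleCat.of B N')) : IsFinDimOver k (ModuleCat.of B N) :=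
  hN'.of_injective (ModuleCat.ofHom (Submodule.inclusion h)) (Submodule.inclusion_injective h)

lemma IsFinDimOver.sup {N N' : Submodule B M} (hN : IsFinDimOver k (ModuleCat.of B N))
    (hN' : IsFinDimOver k (ModuleCat.of B N')) : IsFinDimOver k (ModuleCat.of B ↥(N ⊔ N')) := by
  have : FiniteDimensional k _ := hN
  have : FiniteDimensional k _ := hN'
  let incl {N'' : Submodule B M} (h : N'' ≤ N ⊔ N') :=
    (ModuleCat.restrictScalars (algebraMap k B)).map (ModuleCat.ofHom (Submodule.inclusion h))
  refine Module.Finite.of_surjective ((incl le_sup_left).hom.coprod (incl le_sup_right).hom) ?_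
  rintro ⟨x, hx⟩
  obtain ⟨y, hy, z, hz, rfl⟩ := Submodule.mem_sup.mp hx
  exact ⟨(⟨y, hy⟩, ⟨z, hz⟩), rfl⟩

lemma IsLocFinOver.exists_isFinDimOver_forall_mem (hM : IsLocFinOver k M) (s : Finset M) :
    ∃ N : Submodule B M, IsFinDimOver k (ModuleCat.of B N) ∧ ∀ x ∈ s, x ∈ N := by
  classical
  induction s using Finset.induction_on with
  | empty => exact ⟨⊥, isFinDimOver_bot, by simp⟩
  | insert a s _ ih =>
    obtain ⟨N, hN, hsN⟩ := ih
    obtain ⟨Na, haNa, hNa⟩ := hM a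
    refine ⟨Na ⊔ N, hNa.sup hN, ?_⟩
    simp only [Finset.mem_insert, forall_eq_or_imp]
    exact ⟨Submodule.mem_sup_left haNa, fun x hx ↦ Submodule.mem_sup_right (hsN x hx)⟩

lemma IsLocFinOver.exists_isFinDimOver_le_map {N : Type} [AddCommGroup N] [Module B N]
    (hM : IsLocFinOver k M) (f : M →ₗ[B] N) {K : Submodule B M} {W : Submodule B N}
    (hW : IsFinDimOver k (ModuleCat.of B W)) (hWK : W ≤ K.map f) :
    ∃ P ≤ K, IsFinDimOver k (ModuleCat.of B P) ∧ W ≤ P.map f := by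
  classical
  have : FiniteDimensional k _ := hW
  obtain ⟨t, ht⟩ := Module.Finite.fg_top (R := k)
    (M := (ModuleCat.restrictScalars (algebraMap k B)).obj (ModuleCat.of B W))
  choose g hgK hgf using fun w : W ↦ hWK w.2
  obtain ⟨Q, hQ, htQ⟩ := hM.exists_isFinDimOver_forall_mem (t.image g)
  refine ⟨Q ⊓ K, inf_le_right, hQ.of_le inf_le_left, fun w hw ↦ ?_⟩
  suffices h : ∀ x ∈ Submodule.span k
      (t : Set ((ModuleCat.restrictScalars (algebraMap k B)).obj (ModuleCat.of B W))),
      x.1 ∈ (Q ⊓ K).map f from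
    h ⟨w, hw⟩ (by rw [ht]; trivial)
  intro x hx
  induction hx using Submodule.span_induction with
  | mem x hx => exact ⟨g x, ⟨htQ _ (Finset.mem_image_of_mem g hx), hgK x⟩, hgf x⟩
  | zero => exact zero_mem _
  | add x y _ _ hx hy => exact add_mem hx hy
  | smul c x _ hx => exact Submodule.smul_mem _ (algebraMap k B c) hx

end FiniteDimensionality

namespace HomologicalComplex

variable {k} {ι : Type*} {c : ComplexShape ι} (C : HomologicalComplex (ModuleCat.{0} B) c)

lemma isFinDimOver_map_mkQ_ker (i : ι) (hH : IsFinDimOver k (C.homology i)) :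
    IsFinDimOver k (ModuleCat.of B ↥((LinearMap.ker (C.d i (c.next i)).hom).map
      (LinearMap.range (C.d (c.prev i) i).hom).mkQ)) := by
  let φ := (LinearMap.range (C.d (c.prev i) i).hom).mkQ.submoduleMap
    (LinearMap.ker (C.d i (c.next i)).hom)
  have hφ : LinearMap.range (C.sc i).moduleCatToCycles ≤ LinearMap.ker φ := by
    rintro _ ⟨y, rfl⟩
    exact Subtype.ext ((Submodule.Quotient.mk_eq_zero _).mpr ⟨y, rfl⟩)
  refine (hH.of_surjective (C.sc i).moduleCatHomologyIso.hom ?_).of_surjective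
    (ModuleCat.ofHom ((LinearMap.range (C.sc i).moduleCatToCycles).liftQ φ hφ)) ?_
  · exact ((ConcreteCategory.isIso_iff_bijective _).mp inferInstance).2
  · intro w
    obtain ⟨x, rfl⟩ := LinearMap.submoduleMap_surjective _ _ w
    exact ⟨Submodule.Quotient.mk x, rfl⟩

lemma exists_isLiftingPair {i j : ι} (hij : c.next i = j) (hlf : IsLocFinOver k (C.X i))
    (hH : IsFinDimOver k (C.homology i)) {P : Submodule B (C.X j)}
    (hP : IsFinDimOver k (ModuleCat.of B P)) :
    ∃ Q : Submodule B (C.X i), IsFinDimOver k (ModuleCat.of B Q) ∧ C.IsLiftingPair i j Q P := by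
  subst hij
  obtain ⟨Q₁, hQ₁, hQ₁fd, hPQ₁⟩ := hlf.exists_isFinDimOver_le_map (C.d i (c.next i)).hom
    (K := P.comap (C.d i (c.next i)).hom) (hP.of_le inf_le_left)
    (by rw [Submodule.map_comap_eq, inf_comm])
  obtain ⟨Q₂, hQ₂, hQ₂fd, hQ₂H⟩ := hlf.exists_isFinDimOver_le_map
    (LinearMap.range (C.d (c.prev i) i).hom).mkQ (isFinDimOver_map_mkQ_ker C i hH) le_rfl
  refine ⟨Q₁ ⊔ Q₂, hQ₁fd.sup hQ₂fd, sup_le hQ₁ (hQ₂.trans ?_),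
    hPQ₁.trans (Submodule.map_mono le_sup_left), ?_⟩
  · intro x hx
    simp [LinearMap.mem_ker.mp hx]
  · rw [Submodule.map_le_iff_le_comap, Submodule.comap_map_mkQ] at hQ₂H
    exact hQ₂H.trans (sup_le le_sup_right (le_sup_right.trans le_sup_left))

end HomologicalComplex

theorem Int.exists_forall_le_of_forall_exists {X : ℤ → Type*} [∀ i, Nonempty (X i)] (b : ℤ)
    (r : ∀ i, X (i - 1) → X i → Prop) (h : ∀ i ≤ b, ∀ y, ∃ z, r i z y) :
    ∃ f : ∀ i, X i, ∀ i ≤ b, r i (f (i - 1)) (f i) := by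
  choose g hg using h
  let f (i : ℤ) : X i := Int.inductionOn' i b (Classical.arbitrary _)
    (fun _ _ _ ↦ Classical.arbitrary _) g
  refine ⟨f, fun i hi ↦ ?_⟩
  rw [show f (i - 1) = g i hi (f i) from Int.inductionOn'_sub_one hi]
  exact hg i hi (f i)

namespace CochainComplex

variable {k} (C : CochainComplex (ModuleCat.{0} B) ℤ)

theorem exists_isFinDimOver_isLiftingPair (hlf : ∀ i, IsLocFinOver k (C.X i))
    (hH : ∀ i, IsFinDimOver k (C.homology i)) (hpos : ∀ i : ℤ, 0 < i → Limits.IsZero (C.X i)) :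
    ∃ S : ∀ i, Submodule B (C.X i), (∀ i, IsFinDimOver k (ModuleCat.of B (S i))) ∧
      ∀ i, C.IsLiftingPair (i - 1) i (S (i - 1)) (S i) := by
  let X (i : ℤ) := {P : Submodule B (C.X i) // IsFinDimOver k (ModuleCat.of B P)}
  have (i : ℤ) : Nonempty (X i) := ⟨⟨⊥, isFinDimOver_bot⟩⟩
  obtain ⟨S, hS⟩ := Int.exists_forall_le_of_forall_exists (X := X) 1
    (fun i Q P ↦ C.IsLiftingPair (i - 1) i Q.1 P.1) fun i _ P ↦
      have ⟨Q, hQ, hQP⟩ := C.exists_isLiftingPair ((next ℤ _).trans (sub_add_cancel i 1))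
        (hlf _) (hH _) P.2
      ⟨⟨Q, hQ⟩, hQP⟩
  refine ⟨fun i ↦ (S i).1, fun i ↦ (S i).2, fun i ↦ ?_⟩
  by_cases hi : i ≤ 1
  · exact hS i hi
  · exact .of_isZero _ _ _ (hpos _ (by omega)) (hpos _ (by omega))

end CochainComplex

/-- Let `C` be a cochain complex of locally finite `B`-modules with
`C^i = 0` for `i > 0`, `H^i(C) = 0` for `i ≠ 0`, and `H^0(C)` finite-dimensional over
`k`.  Then `C` has a subcomplex `D` all of whose terms are finite-dimensional over `k`
such that the inclusion `D ↪ C` is a quasi-isomorphism. -/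
theorem exists_finite_dimensional_subcomplex
    (C : CochainComplex (ModuleCat.{0} B) ℤ)
    (hlf : ∀ i : ℤ, IsLocFinOver k (C.X i))
    (hpos : ∀ i : ℤ, 0 < i → Limits.IsZero (C.X i))
    (hhom : ∀ i : ℤ, i ≠ 0 → Limits.IsZero (C.homology i))
    (hfd : IsFinDimOver k (C.homology 0)) :
    ∃ (D : CochainComplex (ModuleCat.{0} B) ℤ) (f : D ⟶ C),
      (∀ i : ℤ, IsFinDimOver k (D.X i)) ∧
      (∀ i : ℤ, Mono (f.f i)) ∧
      QuasiIso f := by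
  have hH (i : ℤ) : IsFinDimOver k (C.homology i) := by
    rcases eq_or_ne i 0 with rfl | hi
    · exact hfd
    · exact .of_isZero (hhom i hi)
  obtain ⟨S, hSfd, hS⟩ := C.exists_isFinDimOver_isLiftingPair hlf hH hpos
  have hSd (i j : ℤ) : S i ≤ (S j).comap (C.d i j).hom := by
    by_cases hij : i + 1 = j
    · subst hij
      have := (hS (i + 1)).le_comap
      rwa [add_sub_cancel_right] at this
    · rw [C.shape i j hij]
      simp
  refine ⟨C.subcomplex S hSd, C.subcomplexι S hSd, hSfd, inferInstance, ?_⟩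
  rw [quasiIso_iff]
  intro j
  apply HomologicalComplex.quasiIsoAt_subcomplexι
  · have := (hS (j + 1)).ker_le_sup_range
    rw [add_sub_cancel_right] at this
    rwa [CochainComplex.next]
  · rw [CochainComplex.prev]
    exact (hS j).inf_range_le_map
end

section
/- For all finite-dimensional B-modules M and N and all integers n ≥ 0, the canonical map Ext^n(M,N) computed in the abelian category of finite-dimensional B-modules → Ext^n(M,N) computed in the abelian category of locally finite B-modules, induced by the exact inclusion functor, is bijective. -/
/-!
`k` is a field, `B` an associative unital `k`-algebra.  A `B`-module is
*finite-dimensional* if its underlying `k`-vector space is; it is *locally finite* if it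
is the union of its finite-dimensional `B`-submodules.  `Ext^n` computed in a full
abelian subcategory of `B`-modules cut out by a predicate `P` is formalized, for
`n ≥ 1`, via its classical Yoneda description (`n`-fold extensions with middle terms
satisfying `P`, modulo the equivalence relation generated by morphisms of extensions),
and for `n = 0` it is the `Hom`-group; the canonical map induced by the exact inclusion
of subcategories is induced by the inclusion of extension classes (the identity on
`Hom` for `n = 0`).
-/
open CategoryTheory

variable (k : Type) [Field k] {B : Type} [Ring B] [Algebra k B]

/-- An `n`-fold Yoneda extension of `M` by `N`, i.e. an exact sequence
`0 → N → Y (n) → ⋯ → Y 1 → M → 0`, with all middle terms satisfying the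
predicate `P`.  (Here `Y 0` is identified with `M` and `Y (n+1)` with `N`.) -/
structure YExtSeq (P : ModuleCat.{0} B → Prop) (n : ℕ) (M N : ModuleCat.{0} B) where
  Y : Fin (n + 2) → ModuleCat.{0} B
  d : ∀ i : Fin (n + 1), Y i.succ ⟶ Y i.castSucc
  isoLeft : Y 0 ≅ M
  isoRight : Y (Fin.last (n + 1)) ≅ N
  middle_mem : ∀ i : Fin (n + 2), i ≠ 0 → i ≠ Fin.last (n + 1) → P (Y i)
  injective_top : Function.Injective (d (Fin.last n))
  surjective_bot : Function.Surjective (d 0)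
  exact_middle : ∀ i : Fin n, Function.Exact (d i.succ) (d i.castSucc)

/-- A morphism of `n`-fold Yoneda extensions inducing the identity on `M` and `N`. -/
structure YExtSeqHom {P : ModuleCat.{0} B → Prop} {n : ℕ} {M N : ModuleCat.{0} B}
    (E E' : YExtSeq P n M N) where
  φ : ∀ i : Fin (n + 2), E.Y i ⟶ E'.Y i
  comm : ∀ i : Fin (n + 1), E.d i ≫ φ i.castSucc = φ i.succ ≫ E'.d i
  commLeft : φ 0 ≫ E'.isoLeft.hom = E.isoLeft.hom
  commRight : E.isoRight.inv ≫ φ (Fin.last (n + 1)) = E'.isoRight.inv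

/-- The relation whose generated equivalence relation defines Yoneda `Ext^n`. -/
def YExtRel (P : ModuleCat.{0} B → Prop) (n : ℕ) (M N : ModuleCat.{0} B) :
    YExtSeq P n M N → YExtSeq P n M N → Prop :=
  fun E E' => Nonempty (YExtSeqHom E E')

/-- `Ext^n(M, N)` (`n ≥ 1`), computed in the full abelian subcategory of `B`-modules
determined by `P`, via its Yoneda description: `n`-extensions modulo the equivalence
relation generated by morphisms of extensions. -/
def YExt (P : ModuleCat.{0} B → Prop) (n : ℕ) (M N : ModuleCat.{0} B) : Type 1 :=
  Quot (YExtRel P n M N)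

/-- The map on Yoneda extensions induced by an inclusion of subcategories. -/
def YExtSeq.relax {P P' : ModuleCat.{0} B → Prop} (h : ∀ M, P M → P' M) {n : ℕ}
    {M N : ModuleCat.{0} B} (E : YExtSeq P n M N) : YExtSeq P' n M N :=
  { E with middle_mem := fun i h1 h2 => h _ (E.middle_mem i h1 h2) }

/-- The canonical map `Ext^n` computed in the subcategory cut out by `P` to `Ext^n`
computed in the subcategory cut out by `P'`, for `P ≤ P'`; it is induced by the exact
fully faithful inclusion functor. -/
def YExtMap {P P' : ModuleCat.{0} B → Prop} (h : ∀ M, P M → P' M) (n : ℕ)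
    (M N : ModuleCat.{0} B) : YExt P n M N → YExt P' n M N :=
  Quot.map (YExtSeq.relax h)
    (fun _ _ ⟨f⟩ => ⟨{ φ := f.φ, comm := f.comm, commLeft := f.commLeft,
                       commRight := f.commRight }⟩)

/-- A finite-dimensional `B`-module is locally finite. -/
theorem isLocFinOver_of_isFinDimOver {M : ModuleCat.{0} B} (h : IsFinDimOver k M) :
    IsLocFinOver k M := by
  intro x
  refine ⟨⊤, trivial, ?_⟩
  have h' : FiniteDimensional k ((ModuleCat.restrictScalars (algebraMap k B)).obj M) := h
  exact FiniteDimensional.of_injective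
    ((ModuleCat.restrictScalars (algebraMap k B)).map
      ((ModuleCat.ofHom (⊤ : Submodule B M).subtype :
        ModuleCat.of B ↥(⊤ : Submodule B M) ⟶ M))).hom
    (fun a b hab => Subtype.ext hab)

/-- `Ext^n(M,N)` in the full abelian subcategory cut out by `P`, for all `n ≥ 0`:
`Hom(M,N)` for `n = 0`, and Yoneda extension classes for `n ≥ 1`. -/
def YExtFull (P : ModuleCat.{0} B → Prop) :
    ℕ → ModuleCat.{0} B → ModuleCat.{0} B → Type 1
  | 0, M, N => ULift.{1} (M ⟶ N)
  | n + 1, M, N => YExt P (n + 1) M N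

/-- The canonical map on `Ext^n` (`n ≥ 0`) induced by an inclusion of subcategories:
the identity on `Hom` for `n = 0`, the induced map on extension classes for `n ≥ 1`. -/
def YExtFullMap {P P' : ModuleCat.{0} B → Prop} (h : ∀ M, P M → P' M) :
    ∀ (n : ℕ) (M N : ModuleCat.{0} B), YExtFull P n M N → YExtFull P' n M N
  | 0, _, _, f => f
  | n + 1, M, N, e => YExtMap h (n + 1) M N e

/-!
Every exact sequence `0 → N → Yₙ → ⋯ → Y₁ → M → 0` with `M`, `N` finite-dimensional and the `Yₚ`
locally finite contains a finite-dimensional exact subsequence with the same ends, which may be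
chosen to contain any prescribed finite-dimensional submodules `Sₚ ⊆ Yₚ`. It is built degree by degree from
the `M` end: the cycles of the part already chosen are boundaries and span a finite-dimensional
space, so local finiteness provides a finite-dimensional submodule one degree up covering them;
closing the result under the differentials keeps it exact because `d ∘ d = 0`.

Sending a locally finite extension to such a subextension inverts the canonical map: two
finite-dimensional extensions mapping to the same locally finite one both map into one
finite-dimensional subextension of it (take `Sₚ` to be the sum of the two images), so they are
Yoneda equivalent.
-/

instance isScalarTower_restrictScalars_algebraMap (M : ModuleCat.{0} B) :
    IsScalarTower k B ((ModuleCat.restrictScalars (algebraMap k B)).obj M) :=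
  ⟨fun c b x => by rw [Algebra.smul_def]; exact mul_smul (algebraMap k B c) b (show M from x)⟩

abbrev IsFinDimSubmodule {M : ModuleCat.{0} B} (A : Submodule B M) : Prop :=
  IsFinDimOver k (ModuleCat.of B A)

noncomputable def Submodule.restrictScalarsAlgebraMap {M : ModuleCat.{0} B} (A : Submodule B M) :
    Submodule k ((ModuleCat.restrictScalars (algebraMap k B)).obj M) :=
  (show Submodule B ((ModuleCat.restrictScalars (algebraMap k B)).obj M) from A).restrictScalars k

section FinDim

variable {k} {M M' : ModuleCat.{0} B}

theorem isFinDimOver_of_iso (e : M ≅ M') (h : IsFinDimOver k M) : IsFinDimOver k M' :=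
  have : FiniteDimensional k ((ModuleCat.restrictScalars (algebraMap k B)).obj M) := h
  Module.Finite.equiv ((ModuleCat.restrictScalars (algebraMap k B)).mapIso e).toLinearEquiv

theorem isFinDimSubmodule_iff (A : Submodule B M) :
    IsFinDimSubmodule k A ↔ FiniteDimensional k (A.restrictScalarsAlgebraMap k) :=
  Module.Finite.equiv_iff
    { toFun := fun x => ⟨x.1, x.2⟩, invFun := fun x => ⟨x.1, x.2⟩,
      map_add' := fun _ _ => rfl, map_smul' := fun _ _ => rfl,
      left_inv := fun _ => rfl, right_inv := fun _ => rfl }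

variable (k) in
theorem isFinDimSubmodule_bot : IsFinDimSubmodule k (⊥ : Submodule B M) := by
  rw [isFinDimSubmodule_iff, show (⊥ : Submodule B M).restrictScalarsAlgebraMap k = ⊥ from rfl]
  infer_instance

theorem isFinDimSubmodule_top (h : IsFinDimOver k M) :
    IsFinDimSubmodule k (⊤ : Submodule B M) := by
  have : FiniteDimensional k ((ModuleCat.restrictScalars (algebraMap k B)).obj M) := h
  rw [isFinDimSubmodule_iff, show (⊤ : Submodule B M).restrictScalarsAlgebraMap k = ⊤ from rfl]
  infer_instance

theorem IsFinDimSubmodule.mono {A A' : Submodule B M} (hle : A ≤ A')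
    (h : IsFinDimSubmodule k A') : IsFinDimSubmodule k A := by
  rw [isFinDimSubmodule_iff] at h ⊢
  exact Submodule.finiteDimensional_of_le
    (show A.restrictScalarsAlgebraMap k ≤ A'.restrictScalarsAlgebraMap k from hle)

theorem IsFinDimSubmodule.sup {A A' : Submodule B M} (h : IsFinDimSubmodule k A)
    (h' : IsFinDimSubmodule k A') : IsFinDimSubmodule k (A ⊔ A') := by
  rw [isFinDimSubmodule_iff] at h h' ⊢
  rw [show (A ⊔ A').restrictScalarsAlgebraMap k =
    A.restrictScalarsAlgebraMap k ⊔ A'.restrictScalarsAlgebraMap k from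
      Submodule.restrictScalars_sup _ _ _]
  infer_instance

theorem IsFinDimSubmodule.map (f : M ⟶ M') {A : Submodule B M} (h : IsFinDimSubmodule k A) :
    IsFinDimSubmodule k (A.map f.hom) := by
  rw [isFinDimSubmodule_iff] at h ⊢
  exact Module.Finite.map (A.restrictScalarsAlgebraMap k)
    ((ModuleCat.restrictScalars (algebraMap k B)).map f).hom

theorem isFinDimSubmodule_range (f : M ⟶ M') (h : IsFinDimOver k M) :
    IsFinDimSubmodule k (LinearMap.range f.hom) := by
  rw [LinearMap.range_eq_map]
  exact (isFinDimSubmodule_top h).map f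

/-- Preimages of a finite `k`-spanning set of `K` lie in finitely many finite-dimensional
submodules. -/
theorem exists_isFinDimSubmodule_le_map (d : M' ⟶ M) (hM' : IsLocFinOver k M')
    {K : Submodule B M} (hK : IsFinDimSubmodule k K) (hKd : K ≤ LinearMap.range d.hom) :
    ∃ F : Submodule B M', IsFinDimSubmodule k F ∧ K ≤ F.map d.hom := by
  obtain ⟨s, hs⟩ := Module.Finite.iff_fg.mp ((isFinDimSubmodule_iff K).mp hK)
  choose! z hz using fun x (hx : x ∈ s) => hKd (hs ▸ Submodule.subset_span hx)
  choose F hzF hF using fun x => hM' (z x)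
  refine ⟨s.sup F, Finset.sup_induction (isFinDimSubmodule_bot k)
    (fun _ h _ h' => h.sup h') (fun x _ => hF x), ?_⟩
  change K.restrictScalarsAlgebraMap k ≤ ((s.sup F).map d.hom).restrictScalarsAlgebraMap k
  rw [← hs, Submodule.span_le]
  exact fun x hx => ⟨z x, Finset.le_sup (f := F) hx (hzF x), hz x hx⟩

end FinDim

namespace YExtSeqHom

variable {P : ModuleCat.{0} B → Prop} {n : ℕ} {M N : ModuleCat.{0} B}

def id (E : YExtSeq P n M N) : YExtSeqHom E E where
  φ _ := 𝟙 _
  comm _ := by simp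
  commLeft := by simp
  commRight := by simp

def comp {E₁ E₂ E₃ : YExtSeq P n M N} (f : YExtSeqHom E₁ E₂) (g : YExtSeqHom E₂ E₃) :
    YExtSeqHom E₁ E₃ where
  φ i := f.φ i ≫ g.φ i
  comm i := by rw [← Category.assoc, f.comm, Category.assoc, g.comm, Category.assoc]
  commLeft := by rw [Category.assoc, g.commLeft, f.commLeft]
  commRight := by rw [← Category.assoc, f.commRight, g.commRight]

def ofRelax {P' : ModuleCat.{0} B → Prop} (h : ∀ X, P X → P' X) {E₁ E₂ : YExtSeq P n M N}
    (f : YExtSeqHom (E₁.relax h) (E₂.relax h)) : YExtSeqHom E₁ E₂ :=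
  ⟨f.φ, f.comm, f.commLeft, f.commRight⟩

end YExtSeqHom

namespace YExtSeq

section

variable {k} {P : ModuleCat.{0} B → Prop} {n : ℕ} {M N : ModuleCat.{0} B}

theorem isFinDimOver_Y_zero (E : YExtSeq P n M N) (hM : IsFinDimOver k M) :
    IsFinDimOver k (E.Y 0) :=
  isFinDimOver_of_iso E.isoLeft.symm hM

theorem isFinDimOver_Y_last (E : YExtSeq P n M N) (hN : IsFinDimOver k N) :
    IsFinDimOver k (E.Y (Fin.last (n + 1))) :=
  isFinDimOver_of_iso E.isoRight.symm hN

theorem isFinDimOver_Y (E : YExtSeq (IsFinDimOver k) n M N) (hM : IsFinDimOver k M)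
    (hN : IsFinDimOver k N) (p : Fin (n + 2)) : IsFinDimOver k (E.Y p) := by
  by_cases h0 : p = 0
  · exact h0 ▸ E.isFinDimOver_Y_zero hM
  by_cases hl : p = Fin.last (n + 1)
  · exact hl ▸ E.isFinDimOver_Y_last hN
  exact E.middle_mem p h0 hl

theorem isLocFinOver_Y_succ (E : YExtSeq (IsLocFinOver k) n M N) (hN : IsFinDimOver k N)
    (i : Fin (n + 1)) : IsLocFinOver k (E.Y i.succ) := by
  by_cases hl : i.succ = Fin.last (n + 1)
  · exact hl ▸ isLocFinOver_of_isFinDimOver k (E.isFinDimOver_Y_last hN)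
  exact E.middle_mem i.succ i.succ_ne_zero hl

theorem d_comp_d_apply (E : YExtSeq P n M N) (i : Fin n) (x : E.Y i.succ.succ) :
    E.d i.castSucc (E.d i.succ x) = 0 :=
  (E.exact_middle i).apply_apply_eq_zero x

variable (E : YExtSeq P n M N)

def ends (p : Fin (n + 2)) : Submodule B (E.Y p) :=
  if p = 0 ∨ p = Fin.last (n + 1) then ⊤ else ⊥

theorem ends_zero : E.ends 0 = ⊤ := if_pos (Or.inl rfl)

theorem ends_last : E.ends (Fin.last (n + 1)) = ⊤ := if_pos (Or.inr rfl)

theorem isFinDimSubmodule_ends (hM : IsFinDimOver k M) (hN : IsFinDimOver k N)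
    (p : Fin (n + 2)) : IsFinDimSubmodule k (E.ends p) := by
  unfold ends
  split_ifs with h
  · rcases h with rfl | rfl
    · exact isFinDimSubmodule_top (E.isFinDimOver_Y_zero hM)
    · exact isFinDimSubmodule_top (E.isFinDimOver_Y_last hN)
  · exact isFinDimSubmodule_bot k

/-- The smallest family of submodules containing `G` and stable under the differentials. -/
noncomputable def dClosure (G : ∀ p, Submodule B (E.Y p)) (p : Fin (n + 2)) :
    Submodule B (E.Y p) :=
  Fin.reverseInduction (motive := fun p => Submodule B (E.Y p)) (G (Fin.last (n + 1)))
    (fun i C => G i.castSucc ⊔ C.map (E.d i).hom) p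

variable {E} (G : ∀ p, Submodule B (E.Y p))

theorem dClosure_last : E.dClosure G (Fin.last (n + 1)) = G (Fin.last (n + 1)) :=
  Fin.reverseInduction_last

theorem dClosure_castSucc (i : Fin (n + 1)) :
    E.dClosure G i.castSucc = G i.castSucc ⊔ (E.dClosure G i.succ).map (E.d i).hom :=
  Fin.reverseInduction_castSucc i

theorem le_dClosure (p : Fin (n + 2)) : G p ≤ E.dClosure G p := by
  induction p using Fin.lastCases with
  | last => exact (dClosure_last G).ge
  | cast i => exact (dClosure_castSucc G i).ge.trans' le_sup_left

theorem map_dClosure_le (i : Fin (n + 1)) :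
    (E.dClosure G i.succ).map (E.d i).hom ≤ E.dClosure G i.castSucc :=
  (dClosure_castSucc G i).ge.trans' le_sup_right

theorem isFinDimSubmodule_dClosure (hG : ∀ p, IsFinDimSubmodule k (G p)) (p : Fin (n + 2)) :
    IsFinDimSubmodule k (E.dClosure G p) := by
  induction p using Fin.reverseInduction with
  | last => exact (dClosure_last G).symm ▸ hG _
  | cast i ih => exact (dClosure_castSucc G i).symm ▸ (hG _).sup (ih.map _)

/-- A cycle of the closure differs from an element of `G` by a boundary. -/
theorem dClosure_inf_ker_le
    (hG : ∀ i, G i.castSucc ⊓ LinearMap.range (E.d i).hom ≤ (G i.succ).map (E.d i).hom)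
    (i : Fin n) :
    E.dClosure G i.succ.castSucc ⊓ LinearMap.ker (E.d i.castSucc).hom ≤
      (E.dClosure G i.succ.succ).map (E.d i.succ).hom := by
  intro x hx
  obtain ⟨hx, hker⟩ := Submodule.mem_inf.mp hx
  rw [dClosure_castSucc, Submodule.mem_sup] at hx
  obtain ⟨g, hg, _, ⟨y, hy, rfl⟩, rfl⟩ := hx
  have hg_ker : E.d i.castSucc g = 0 := by
    simpa [E.d_comp_d_apply] using LinearMap.mem_ker.mp hker
  have hg_range : g ∈ LinearMap.range (E.d i.succ).hom := (E.exact_middle i g).mp hg_ker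
  exact Submodule.add_mem _
    (Submodule.map_mono (le_dClosure G _) (hG i.succ ⟨hg, hg_range⟩))
    (Submodule.mem_map_of_mem hy)

end

section

variable {P : ModuleCat.{0} B → Prop} {n : ℕ} {M N : ModuleCat.{0} B} (E : YExtSeq P n M N)

structure IsExactFinDimSub (A : ∀ p, Submodule B (E.Y p)) : Prop where
  isFinDimSubmodule : ∀ p, IsFinDimSubmodule k (A p)
  map_le : ∀ i, (A i.succ).map (E.d i).hom ≤ A i.castSucc
  zero_eq_top : A 0 = ⊤
  last_eq_top : A (Fin.last (n + 1)) = ⊤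
  top_le_map : ⊤ ≤ (A (0 : Fin (n + 1)).succ).map (E.d 0).hom
  inf_ker_le : ∀ i : Fin n,
    A i.succ.castSucc ⊓ LinearMap.ker (E.d i.castSucc).hom ≤ (A i.succ.succ).map (E.d i.succ).hom

variable {k E} {A : ∀ p, Submodule B (E.Y p)}

noncomputable def restrict (hA : E.IsExactFinDimSub k A) : YExtSeq (IsFinDimOver k) n M N where
  Y p := ModuleCat.of B (A p)
  d i := ModuleCat.ofHom <|
    (E.d i).hom.restrict fun _ hx => hA.map_le i (Submodule.mem_map_of_mem hx)
  isoLeft := (LinearEquiv.ofTop _ hA.zero_eq_top).toModuleIso ≪≫ E.isoLeft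
  isoRight := (LinearEquiv.ofTop _ hA.last_eq_top).toModuleIso ≪≫ E.isoRight
  middle_mem p _ _ := hA.isFinDimSubmodule p
  injective_top _ _ h := Subtype.ext (E.injective_top (congrArg Subtype.val h))
  surjective_bot y := by
    obtain ⟨z, hz, hzy⟩ := hA.top_le_map (Submodule.mem_top (x := y.1))
    exact ⟨⟨z, hz⟩, Subtype.ext hzy⟩
  exact_middle i y := by
    constructor
    · intro hy
      obtain ⟨z, hz, hzy⟩ := hA.inf_ker_le i ⟨y.2, congrArg Subtype.val hy⟩
      exact ⟨⟨z, hz⟩, Subtype.ext hzy⟩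
    · rintro ⟨z, rfl⟩
      exact Subtype.ext (E.d_comp_d_apply i z.1)

variable (h : ∀ X, IsFinDimOver k X → P X)

noncomputable def restrictInclusion (hA : E.IsExactFinDimSub k A) :
    YExtSeqHom ((restrict hA).relax h) E where
  φ p := ModuleCat.ofHom (A p).subtype
  comm _ := rfl
  commLeft := rfl
  commRight := rfl

noncomputable def _root_.YExtSeqHom.codRestrict (hA : E.IsExactFinDimSub k A)
    {W : YExtSeq P n M N} (ψ : YExtSeqHom W E) (hψ : ∀ p x, ψ.φ p x ∈ A p) :
    YExtSeqHom W ((restrict hA).relax h) where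
  φ p := ModuleCat.ofHom <| (ψ.φ p).hom.codRestrict (A p) (hψ p)
  comm i := by ext x; exact Subtype.ext (ConcreteCategory.congr_hom (ψ.comm i) x)
  commLeft := by ext x; exact ConcreteCategory.congr_hom ψ.commLeft x
  commRight := by ext x; exact Subtype.ext (ConcreteCategory.congr_hom ψ.commRight x)

end

section

variable {k} {P : ModuleCat.{0} B → Prop} {n : ℕ} {M N : ModuleCat.{0} B}

theorem exists_isFinDimSubmodule_lifts (E : YExtSeq P n M N)
    (hloc : ∀ i : Fin (n + 1), IsLocFinOver k (E.Y i.succ)) (G : ∀ p, Submodule B (E.Y p))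
    (hG : ∀ p, IsFinDimSubmodule k (G p)) :
    ∃ F : ∀ p, Submodule B (E.Y p), (∀ p, IsFinDimSubmodule k (F p)) ∧
      ∀ i, (G i.castSucc ⊔ F i.castSucc) ⊓ LinearMap.range (E.d i).hom ≤
        (F i.succ).map (E.d i).hom := by
  choose L hL hLift using
    fun i (C : {C : Submodule B (E.Y (Fin.castSucc i)) // IsFinDimSubmodule k C}) =>
    exists_isFinDimSubmodule_le_map (E.d i) (hloc i) (((hG _).sup C.2).mono inf_le_left)
      inf_le_right
  let F : ∀ p, {C : Submodule B (E.Y p) // IsFinDimSubmodule k C} :=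
    Fin.induction ⟨⊥, isFinDimSubmodule_bot k⟩ fun i C => ⟨L i C, hL i C⟩
  refine ⟨fun p => (F p).1, fun p => (F p).2, fun i => ?_⟩
  have hF : F i.succ = ⟨L i (F i.castSucc), hL i _⟩ := Fin.induction_succ _ _ i
  dsimp only
  rw [hF]
  exact hLift i (F i.castSucc)

theorem exists_isExactFinDimSub (E : YExtSeq (IsLocFinOver k) n M N) (hM : IsFinDimOver k M)
    (hN : IsFinDimOver k N) (S : ∀ p, Submodule B (E.Y p))
    (hS : ∀ p, IsFinDimSubmodule k (S p)) :
    ∃ A, E.IsExactFinDimSub k A ∧ ∀ p, S p ≤ A p := by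
  let G p := E.ends p ⊔ S p
  have hG p : IsFinDimSubmodule k (G p) := (E.isFinDimSubmodule_ends hM hN p).sup (hS p)
  obtain ⟨F, hF, hFlift⟩ := E.exists_isFinDimSubmodule_lifts (E.isLocFinOver_Y_succ hN) G hG
  let H p := G p ⊔ F p
  have hH_lift (i : Fin (n + 1)) : H i.castSucc ⊓ LinearMap.range (E.d i).hom ≤
      (H i.succ).map (E.d i).hom :=
    (hFlift i).trans (Submodule.map_mono le_sup_right)
  have hG_le p : G p ≤ E.dClosure H p := le_sup_left.trans (le_dClosure H p)
  have hends_le p : E.ends p ≤ E.dClosure H p := le_sup_left.trans (hG_le p)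
  have hrange : LinearMap.range (E.d 0).hom = ⊤ := LinearMap.range_eq_top.mpr E.surjective_bot
  refine ⟨E.dClosure H,
    ⟨isFinDimSubmodule_dClosure _ fun p => (hG p).sup (hF p), map_dClosure_le _,
      top_le_iff.mp (E.ends_zero ▸ hends_le 0), top_le_iff.mp (E.ends_last ▸ hends_le _), ?_,
      dClosure_inf_ker_le _ hH_lift⟩,
    fun p => le_sup_right.trans (hG_le p)⟩
  calc ⊤ ≤ H (0 : Fin (n + 1)).castSucc ⊓ LinearMap.range (E.d 0).hom := by
        rw [hrange, inf_top_eq, Fin.castSucc_zero]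
        exact E.ends_zero.ge.trans (le_sup_left.trans le_sup_left)
    _ ≤ _ := (hH_lift 0).trans (Submodule.map_mono (le_dClosure _ _))

noncomputable def finDimApprox (E : YExtSeq (IsLocFinOver k) n M N) (hM : IsFinDimOver k M)
    (hN : IsFinDimOver k N) : YExtSeq (IsFinDimOver k) n M N :=
  restrict (E.exists_isExactFinDimSub hM hN (fun _ => ⊥)
    fun _ => isFinDimSubmodule_bot k).choose_spec.1

noncomputable def finDimApproxInclusion (E : YExtSeq (IsLocFinOver k) n M N)
    (hM : IsFinDimOver k M) (hN : IsFinDimOver k N) :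
    YExtSeqHom ((E.finDimApprox hM hN).relax fun _ => isLocFinOver_of_isFinDimOver k) E :=
  restrictInclusion _ _

/-- Both maps factor through a finite-dimensional subextension containing the two images. -/
theorem mk_eq_of_homs_relax (hM : IsFinDimOver k M) (hN : IsFinDimOver k N)
    {W W' : YExtSeq (IsFinDimOver k) n M N} {E : YExtSeq (IsLocFinOver k) n M N}
    (u : YExtSeqHom (W.relax fun _ => isLocFinOver_of_isFinDimOver k) E)
    (v : YExtSeqHom (W'.relax fun _ => isLocFinOver_of_isFinDimOver k) E) :
    Quot.mk (YExtRel (IsFinDimOver k) n M N) W = Quot.mk _ W' := by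
  obtain ⟨A, hA, hle⟩ := E.exists_isExactFinDimSub hM hN
    (fun p => LinearMap.range (u.φ p).hom ⊔ LinearMap.range (v.φ p).hom)
    fun p => (isFinDimSubmodule_range _ (W.isFinDimOver_Y hM hN p)).sup
      (isFinDimSubmodule_range _ (W'.isFinDimOver_Y hM hN p))
  have h (X : ModuleCat.{0} B) : IsFinDimOver k X → IsLocFinOver k X :=
    isLocFinOver_of_isFinDimOver k
  let u' := u.codRestrict h hA fun p x => hle p (Submodule.mem_sup_left ⟨x, rfl⟩)
  let v' := v.codRestrict h hA fun p x => hle p (Submodule.mem_sup_right ⟨x, rfl⟩)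
  exact (Quot.sound ⟨u'.ofRelax h⟩).trans (Quot.sound ⟨v'.ofRelax h⟩).symm

end

end YExtSeq

/-- For all finite-dimensional `B`-modules `M`, `N` and all `n ≥ 0`,
the canonical map from `Ext^n(M,N)` computed in the abelian category of
finite-dimensional `B`-modules to `Ext^n(M,N)` computed in the abelian category of
locally finite `B`-modules, induced by the exact inclusion functor, is bijective. -/
theorem ext_canonical_map_finDim_to_locFin_bijective :
    ∀ (M N : ModuleCat.{0} B), IsFinDimOver k M → IsFinDimOver k N →
      ∀ n : ℕ,
        Function.Bijective
          (YExtFullMap (P := IsFinDimOver k) (P' := IsLocFinOver k)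
            (fun _ hM => isLocFinOver_of_isFinDimOver k hM) n M N) := by
  intro M N hM hN n
  cases n with
  | zero => exact Function.bijective_id
  | succ n =>
    refine Function.bijective_iff_has_inverse.mpr
      ⟨Quot.lift (fun E => Quot.mk _ (E.finDimApprox hM hN)) fun E E' ⟨f⟩ =>
        YExtSeq.mk_eq_of_homs_relax hM hN ((E.finDimApproxInclusion hM hN).comp f)
          (E'.finDimApproxInclusion hM hN), ?_, ?_⟩
    · rintro ⟨W⟩
      exact YExtSeq.mk_eq_of_homs_relax hM hN (YExtSeq.finDimApproxInclusion _ hM hN)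
        (YExtSeqHom.id _)
    · rintro ⟨E⟩
      exact Quot.sound ⟨E.finDimApproxInclusion hM hN⟩
end
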